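/- Let G be an l × r complete bipartite graph with r ≥ 2, and let k, ℓ be two right-side vertices. Under the zero-field ferromagnetic Ising model at inverse temperature θ satisfying θ ≥ 2/l, and θ ≥ 3/(r−2) if r > 2 (or θ ≥ log 2 if r = 2), one has E[X_k·X_ℓ] ≥ 1 − 2(r−1)/(exp(θl) + r − 1). -/

import Mathlib

/-!
Summing out the right side first: given a left configuration `x` with magnetization `m`, the
right spins are independent in the field `θ m`, so the partition function is
`Z = ∑ₓ cₓ ^ r` with `cₓ = 2 cosh (θ m)`, and the unnormalized correlation of two right spins is
`∑ₓ (2 sinh (θ m)) ^ 2 cₓ ^ (r - 2) = Z - 4 T` with `T = ∑ₓ cₓ ^ (r - 2)`. The bound is thus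
equivalent to `2 (e^{θ l} + r - 1) T ≤ (r - 1) Z`. Both aligned configurations have
`cₓ ≥ e^{θ l}`, while `cₓ ≥ 2` always. For `r = 2` we have `T = 2 ^ l ≤ e^{θ l}` and the two
aligned configurations alone make `Z` large enough. For `r ≥ 3` the power mean inequality gives
`T ^ r ≤ 4 ^ l Z ^ (r - 2)`, and `Z ≥ e^{θ l r}` from one aligned configuration finishes the proof.
-/

/-- The spin value of a Boolean configuration entry. -/
def spin (b : Bool) : ℝ := if b then 1 else -1

/-- Energy of the zero-field ferromagnetic Ising model on the complete bipartite graph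
with left part `Fin l` and right part `Fin r`, at inverse temperature `θ`. -/
noncomputable def bicliqueEnergy (l r : ℕ) (θ : ℝ)
    (p : (Fin l → Bool) × (Fin r → Bool)) : ℝ :=
  θ * (∑ u, spin (p.1 u)) * (∑ v, spin (p.2 v))

open Finset Real

theorem Finset.sum_pow_pow_le_card_pow_mul_sum_pow_pow {ι : Type*} (s : Finset ι) {f : ι → ℝ}
    (hf : ∀ i ∈ s, 0 ≤ f i) {m n : ℕ} (hmn : m ≤ n) :
    (∑ i ∈ s, f i ^ m) ^ n ≤ (#s : ℝ) ^ (n - m) * (∑ i ∈ s, f i ^ n) ^ m := by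
  rcases Nat.eq_zero_or_pos m with rfl | hm
  · simp
  have hm' : (0 : ℝ) < m := by exact_mod_cast hm
  set p : ℝ := n / m
  have hp : 1 ≤ p := by
    rw [le_div_iff₀ hm', one_mul]; exact_mod_cast hmn
  have hpow : ∀ i ∈ s, (f i ^ m) ^ p = f i ^ n := fun i hi => by
    rw [← rpow_natCast, ← rpow_mul (hf i hi), mul_div_cancel₀ _ hm'.ne', rpow_natCast]
  have jensen := rpow_sum_le_const_mul_sum_rpow_of_nonneg s hp
    (fun i hi => pow_nonneg (hf i hi) m)
  rw [sum_congr rfl hpow] at jensen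
  have hsum : 0 ≤ ∑ i ∈ s, f i ^ m := sum_nonneg fun i hi => pow_nonneg (hf i hi) m
  calc (∑ i ∈ s, f i ^ m) ^ n = ((∑ i ∈ s, f i ^ m) ^ p) ^ m := by
        rw [← rpow_natCast, ← rpow_natCast, ← rpow_mul hsum, div_mul_cancel₀ _ hm'.ne']
    _ ≤ ((#s : ℝ) ^ (p - 1) * ∑ i ∈ s, f i ^ n) ^ m := by gcongr
    _ = (#s : ℝ) ^ (n - m) * (∑ i ∈ s, f i ^ n) ^ m := by
        rw [mul_pow, ← rpow_natCast _ (n - m), ← rpow_natCast (_ ^ (p - 1)),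
          ← rpow_mul (Nat.cast_nonneg _), sub_one_mul, div_mul_cancel₀ _ hm'.ne',
          Nat.cast_sub hmn]

section SpinSums

variable {ι : Type*} [Fintype ι] [DecidableEq ι]

theorem sum_prod_spin_mul_exp (A : Finset ι) (t : ℝ) :
    ∑ y : ι → Bool, (∏ v ∈ A, spin (y v)) * exp (t * ∑ v, spin (y v))
      = (2 * sinh t) ^ #A * (2 * cosh t) ^ (Fintype.card ι - #A) := by
  set g : ι → Bool → ℝ := fun v b => (if v ∈ A then spin b else 1) * exp (t * spin b)
  have hterm : ∀ y : ι → Bool,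
      (∏ v ∈ A, spin (y v)) * exp (t * ∑ v, spin (y v)) = ∏ v, g v (y v) := fun y => by
    rw [prod_mul_distrib, Fintype.prod_ite_mem, mul_sum, exp_sum]
  have hfactor : ∀ v, ∑ b, g v b = if v ∈ A then 2 * sinh t else 2 * cosh t := fun v => by
    by_cases hv : v ∈ A <;> simp [g, hv, spin, sinh_eq, cosh_eq] <;> ring
  simp_rw [hterm, ← Fintype.prod_sum, hfactor, prod_ite, prod_const]
  simp [filter_not, card_sdiff]

theorem sum_exp_mul_sum_spin (t : ℝ) :
    ∑ y : ι → Bool, exp (t * ∑ v, spin (y v)) = (2 * cosh t) ^ Fintype.card ι := by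
  simpa using sum_prod_spin_mul_exp (∅ : Finset ι) t

theorem sum_spin_mul_spin_mul_exp {k ℓ : ι} (hkl : k ≠ ℓ) (t : ℝ) :
    ∑ y : ι → Bool, spin (y k) * spin (y ℓ) * exp (t * ∑ v, spin (y v))
      = (2 * cosh t) ^ Fintype.card ι - 4 * (2 * cosh t) ^ (Fintype.card ι - 2) := by
  have hcard : 2 ≤ Fintype.card ι := Fintype.one_lt_card_iff.2 ⟨k, ℓ, hkl⟩
  have h := sum_prod_spin_mul_exp {k, ℓ} t
  rw [card_pair hkl, mul_pow, sinh_sq] at h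
  simp_rw [prod_pair hkl] at h
  rw [h, ← Nat.sub_add_cancel hcard, Nat.add_sub_cancel, pow_add]
  ring

end SpinSums

theorem sum_exp_bicliqueEnergy (l r : ℕ) (θ : ℝ) :
    ∑ p, exp (bicliqueEnergy l r θ p)
      = ∑ x : Fin l → Bool, (2 * cosh (θ * ∑ u, spin (x u))) ^ r := by
  rw [Fintype.sum_prod_type]
  exact sum_congr rfl fun x _ =>
    (sum_exp_mul_sum_spin (ι := Fin r) (θ * ∑ u, spin (x u))).trans (by rw [Fintype.card_fin])

theorem sum_spin_mul_spin_mul_exp_bicliqueEnergy (l : ℕ) {r : ℕ} (θ : ℝ) {k ℓ : Fin r}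
    (hkl : k ≠ ℓ) :
    ∑ p, spin (p.2 k) * spin (p.2 ℓ) * exp (bicliqueEnergy l r θ p)
      = ∑ x : Fin l → Bool, (2 * cosh (θ * ∑ u, spin (x u))) ^ r
        - 4 * ∑ x : Fin l → Bool, (2 * cosh (θ * ∑ u, spin (x u))) ^ (r - 2) := by
  rw [Fintype.sum_prod_type, mul_sum, ← sum_sub_distrib]
  exact sum_congr rfl fun x _ =>
    (sum_spin_mul_spin_mul_exp hkl (θ * ∑ u, spin (x u))).trans (by rw [Fintype.card_fin])

theorem exp_le_two_mul_cosh (t : ℝ) : exp t ≤ 2 * cosh t := by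
  rw [cosh_eq]; linarith [exp_pos (-t)]

section PowerSums

variable {ι : Type*} (s : Finset ι) {c : ι → ℝ}

theorem two_mul_add_one_mul_card_le_sum_sq (hc : ∀ i ∈ s, 2 ≤ c i) {a b : ι} (ha : a ∈ s)
    (hb : b ∈ s) (hab : a ≠ b) {E : ℝ} (hE : 4 ≤ E) (hcard : #s ≤ E) (hca : E ≤ c a)
    (hcb : E ≤ c b) :
    2 * (E + 1) * #s ≤ ∑ i ∈ s, c i ^ 2 := by
  classical
  have hpair : c a ^ 2 - 4 + (c b ^ 2 - 4) ≤ ∑ i ∈ s, (c i ^ 2 - 4) := by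
    have := sum_le_sum_of_subset_of_nonneg (f := fun i => c i ^ 2 - 4)
      (insert_subset ha (singleton_subset_iff.2 hb)) fun i hi _ => by nlinarith [hc i hi]
    rwa [sum_pair hab] at this
  rw [sum_sub_distrib, sum_const, nsmul_eq_mul] at hpair
  nlinarith [mul_le_mul_of_nonneg_left hcard (by linarith : (0 : ℝ) ≤ E - 1)]

theorem two_mul_add_mul_sum_pow_le (hc : ∀ i ∈ s, 0 ≤ c i) {a : ι} (ha : a ∈ s) {u : ℝ}
    (hu : 2 ≤ u) (hca : u ^ 2 ≤ c a) {r : ℕ} (hr : 3 ≤ r) (hcard : (#s : ℝ) ^ 2 ≤ u ^ r) :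
    2 * (u ^ 2 + r - 1) * ∑ i ∈ s, c i ^ (r - 2) ≤ (r - 1) * ∑ i ∈ s, c i ^ r := by
  set T := ∑ i ∈ s, c i ^ (r - 2)
  set Z := ∑ i ∈ s, c i ^ r
  have hr' : (3 : ℝ) ≤ r := by exact_mod_cast hr
  have hT : 0 ≤ T := sum_nonneg fun i hi => pow_nonneg (hc i hi) _
  have hZ : (u ^ 2) ^ r ≤ Z := (pow_le_pow_left₀ (by positivity) hca r).trans
    (single_le_sum (f := fun i => c i ^ r) (fun i hi => pow_nonneg (hc i hi) r) ha)
  have hZ₀ : 0 ≤ Z := (by positivity : (0 : ℝ) ≤ (u ^ 2) ^ r).trans hZ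
  have power_mean : T ^ r ≤ u ^ r * Z ^ (r - 2) := by
    have := s.sum_pow_pow_le_card_pow_mul_sum_pow_pow hc (Nat.sub_le r 2)
    rw [Nat.sub_sub_self (by omega : 2 ≤ r)] at this
    exact this.trans (mul_le_mul_of_nonneg_right hcard (by positivity))
  have hscalar : 2 * (u ^ 2 + r - 1) * u ≤ (r - 1) * (u ^ 2) ^ 2 := by
    have hu3 : 2 * u ^ 2 ≤ u ^ 3 := by nlinarith
    have hu8 : 8 ≤ u ^ 3 := by nlinarith
    have : 2 * u ^ 2 + 2 * (r - 1) ≤ (r - 1) * u ^ 3 := by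
      nlinarith [mul_le_mul_of_nonneg_left hu8 (by linarith : (0 : ℝ) ≤ r - 2)]
    nlinarith [mul_le_mul_of_nonneg_left this (by linarith : (0 : ℝ) ≤ u)]
  have hD : 0 ≤ 2 * (u ^ 2 + r - 1) := by nlinarith
  have hR : (0 : ℝ) ≤ r - 1 := by linarith
  refine le_of_pow_le_pow_left₀ (by omega : r ≠ 0) (by nlinarith) ?_
  calc (2 * (u ^ 2 + r - 1) * T) ^ r = (2 * (u ^ 2 + r - 1)) ^ r * T ^ r := mul_pow ..
    _ ≤ (2 * (u ^ 2 + r - 1)) ^ r * (u ^ r * Z ^ (r - 2)) :=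
        mul_le_mul_of_nonneg_left power_mean (pow_nonneg hD r)
    _ = (2 * (u ^ 2 + r - 1) * u) ^ r * Z ^ (r - 2) := by rw [mul_pow _ u, mul_assoc]
    _ ≤ ((r - 1) * (u ^ 2) ^ 2) ^ r * Z ^ (r - 2) :=
        mul_le_mul_of_nonneg_right (pow_le_pow_left₀ (by positivity) hscalar r) (by positivity)
    _ = (r - 1) ^ r * ((u ^ 2) ^ r) ^ 2 * Z ^ (r - 2) := by simp only [mul_pow, ← pow_mul]; ring
    _ ≤ (r - 1) ^ r * Z ^ 2 * Z ^ (r - 2) := by gcongr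
    _ = ((r - 1) * Z) ^ r := by
        rw [mul_assoc, ← pow_add, Nat.add_sub_cancel' (by omega : 2 ≤ r), mul_pow]

end PowerSums

section AlignedConfigurations

variable {l : ℕ} {θ : ℝ} {c : (Fin l → Bool) → ℝ}

theorem two_mul_exp_add_one_mul_two_pow_le_sum_sq (hl : 1 ≤ l) (hθl : 2 ≤ θ * l)
    (hθ : log 2 ≤ θ) (hc : ∀ x, 2 ≤ c x) (hEc : ∀ b, exp (θ * l) ≤ c fun _ => b) :
    2 * (exp (θ * l) + 1) * 2 ^ l ≤ ∑ x, c x ^ 2 := by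
  have hE : 4 ≤ exp (θ * l) := calc
    (4 : ℝ) = 2 ^ 2 := by norm_num
    _ ≤ exp 1 ^ 2 := by gcongr; linarith [add_one_le_exp 1]
    _ = exp 2 := by rw [← exp_nat_mul]; norm_num
    _ ≤ exp (θ * l) := exp_le_exp.2 hθl
  have hcard : (#(univ : Finset (Fin l → Bool)) : ℝ) ≤ exp (θ * l) := calc
    (#(univ : Finset (Fin l → Bool)) : ℝ) = exp (log 2) ^ l := by simp [exp_log two_pos]
    _ ≤ exp θ ^ l := by gcongr
    _ = exp (θ * l) := by rw [← exp_nat_mul, mul_comm]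
  have hne : (fun _ => true : Fin l → Bool) ≠ fun _ => false :=
    fun h => by simpa using congrFun h ⟨0, hl⟩
  simpa using two_mul_add_one_mul_card_le_sum_sq univ (fun x _ => hc x) (mem_univ _)
    (mem_univ _) hne hE hcard (hEc true) (hEc false)

theorem two_mul_exp_add_mul_sum_pow_le {r : ℕ} (hr : 3 ≤ r) (hθl : 2 ≤ θ * l)
    (hθr : 3 / ((r : ℝ) - 2) ≤ θ) (hc : ∀ x, 0 ≤ c x) (hEc : exp (θ * l) ≤ c fun _ => true) :
    2 * (exp (θ * l) + r - 1) * ∑ x, c x ^ (r - 2) ≤ (r - 1) * ∑ x, c x ^ r := by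
  set u := exp (θ * l / 2)
  have huE : u ^ 2 = exp (θ * l) := by rw [← exp_nat_mul]; congr 1; ring
  have hu : 2 ≤ u := by
    linarith [add_one_le_exp 1, exp_le_exp.2 (by linarith : 1 ≤ θ * l / 2)]
  have hθr' : 3 < θ * r := by
    have hr2 : (0 : ℝ) < r - 2 := by
      have : (3 : ℝ) ≤ r := by exact_mod_cast hr
      linarith
    have hθ : 0 < θ := (div_pos three_pos hr2).trans_le hθr
    rw [div_le_iff₀ hr2] at hθr
    linarith
  -- `4 ^ l ≤ exp (θ l r / 2)` because `4 log 2 < 3 < θ r`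
  have hcard : (#(univ : Finset (Fin l → Bool)) : ℝ) ^ 2 ≤ u ^ r := by
    have : (#(univ : Finset (Fin l → Bool)) : ℝ) = exp (log 2) ^ l := by simp [exp_log two_pos]
    rw [this, ← exp_nat_mul, ← exp_nat_mul, ← exp_nat_mul, exp_le_exp]
    have := log_two_lt_d9
    have : (0 : ℝ) ≤ l := by positivity
    nlinarith
  rw [← huE]
  exact two_mul_add_mul_sum_pow_le univ (fun x _ => hc x) (mem_univ _) hu (huE ▸ hEc) hr hcard

end AlignedConfigurations

/-- Low temperature bound: for two right-side vertices `k, ℓ` of an `l × r` biclique,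
under `θ ≥ 2/l` and `θ ≥ 3/(r-2)` when `r > 2` (resp. `θ ≥ log 2` when `r = 2`), the
correlation satisfies `E[X_k X_ℓ] ≥ 1 - 2(r-1)/(exp(θ l) + r - 1)`. -/
theorem biclique_low_temp_bound (l r : ℕ) (hl : 1 ≤ l) (hr : 2 ≤ r) (θ : ℝ)
    (hθl : 2 / (l : ℝ) ≤ θ)
    (hθr : 2 < r → 3 / ((r : ℝ) - 2) ≤ θ)
    (hθr2 : r = 2 → Real.log 2 ≤ θ)
    (k ℓ : Fin r) (hkl : k ≠ ℓ) :
    1 - 2 * ((r : ℝ) - 1) / (Real.exp (θ * l) + (r : ℝ) - 1)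
      ≤ (∑ p : (Fin l → Bool) × (Fin r → Bool),
            spin (p.2 k) * spin (p.2 ℓ) * Real.exp (bicliqueEnergy l r θ p)) /
        (∑ p : (Fin l → Bool) × (Fin r → Bool), Real.exp (bicliqueEnergy l r θ p)) := by
  rw [sum_spin_mul_spin_mul_exp_bicliqueEnergy l θ hkl, sum_exp_bicliqueEnergy]
  set c : (Fin l → Bool) → ℝ := fun x => 2 * cosh (θ * ∑ u, spin (x u))
  have hc : ∀ x, 2 ≤ c x := fun x => by simp [c, one_le_cosh]
  have hEc : ∀ b : Bool, exp (θ * l) ≤ c fun _ => b := fun b => by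
    cases b <;> simpa [c, spin] using exp_le_two_mul_cosh (θ * l)
  have hθl' : 2 ≤ θ * l := by rwa [div_le_iff₀ (by positivity)] at hθl
  have key : 2 * (exp (θ * l) + r - 1) * ∑ x, c x ^ (r - 2) ≤ (r - 1) * ∑ x, c x ^ r := by
    rcases hr.eq_or_lt with rfl | hr3
    · have := two_mul_exp_add_one_mul_two_pow_le_sum_sq hl hθl' (hθr2 rfl) hc hEc
      norm_num
      linarith
    · exact two_mul_exp_add_mul_sum_pow_le hr3 hθl' (hθr hr3) (fun x => zero_le_two.trans (hc x))
        (hEc true)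
  have hZpos : 0 < ∑ x, c x ^ r := by positivity
  have hD : 0 < exp (θ * l) + r - 1 := by
    have : (2 : ℝ) ≤ r := by exact_mod_cast hr
    linarith [exp_pos (θ * l)]
  rw [le_div_iff₀ hZpos, sub_mul, one_mul, div_mul_eq_mul_div, sub_le_sub_iff_left,
    le_div_iff₀ hD]
  linarith
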